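/- Let k ≥ 1 and n ≥ 2k+5 be integers. Then the number of digitally convex sets of the k-th power of the cycle on n vertices satisfies n_D(C_n^k) = 2·n_D(C_{n−1}^k) − n_D(C_{n−2}^k) + n_D(C_{n−2k−2}^k). -/

import Mathlib

/-!
Taking complements, digitally convex sets of `C_n^k` correspond to the subsets of `ZMod n` that
are unions of windows of `m = 2k+1` consecutive vertices, because these windows are exactly the
closed neighbourhoods. Reading a proper such set around the circle, starting right after its
first gap `z`, is a bijection onto the subsets of `{0, …, n-2}` that are unions of length-`m`
intervals and end in at least `z` ones.

Let `R N` count these linear words of length `N`. A final run always has length at least `m`,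
and deleting the last element of a final run longer than `m` is a bijection; summing over `z`
gives `n_D(C_{N+2}^k) = (m+1) R (N+1) - (m-1) R N`. Sorting words by whether they end in a
zero, in a run longer than `m`, or in a run of length exactly `m` gives
`R (N+2) - 2 R (N+1) + R N = R (N+1-m)`, and the recurrence for `n_D` is a linear combination of
two instances of this one.
-/

open SimpleGraph

/-- `N[S]`: the union of closed neighbourhoods of the vertices of `S`. -/
def closedNbhd {V : Type*} (G : SimpleGraph V) (S : Set V) : Set V :=
  ⋃ v ∈ S, insert v (G.neighborSet v)

/-- A set `S` is digitally convex in `G` if every vertex `v` with `N[v] ⊆ N[S]`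
belongs to `S`. -/
def DigConvex {V : Type*} (G : SimpleGraph V) (S : Set V) : Prop :=
  ∀ v : V, insert v (G.neighborSet v) ⊆ closedNbhd G S → v ∈ S

/-- `n_D(G)`: the number of digitally convex sets of `G`. -/
noncomputable def nD {V : Type*} (G : SimpleGraph V) : ℕ :=
  Nat.card {S : Set V // DigConvex G S}

/-- The `k`-th power `C_n^k` of the cycle `C_n`: distinct vertices `i j : ZMod n`
are adjacent iff `j - i ∈ {±1, ±2, …, ±k}`. -/
def cyclePow (n k : ℕ) : SimpleGraph (ZMod n) :=
  SimpleGraph.fromRel (fun i j => ∃ t : ℕ, 1 ≤ t ∧ t ≤ k ∧ j = i + (t : ZMod n))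

open Finset

namespace DigitalConvexity

section Linear

def RunClosed (m : ℕ) (s : Finset ℕ) : Prop :=
  ∀ i ∈ s, ∃ j, i ∈ Ico j (j + m) ∧ Ico j (j + m) ⊆ s

open scoped Classical in
noncomputable def runClosedFinsets (m N : ℕ) : Finset (Finset ℕ) :=
  {s ∈ (range N).powerset | RunClosed m s}

noncomputable def runCount (m N : ℕ) : ℕ := #(runClosedFinsets m N)

noncomputable def tailRunCount (m N z : ℕ) : ℕ :=
  #{s ∈ runClosedFinsets m N | Ico (N - z) N ⊆ s}

variable {m N : ℕ} {s : Finset ℕ}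

lemma mem_runClosedFinsets : s ∈ runClosedFinsets m N ↔ s ⊆ range N ∧ RunClosed m s := by
  simp [runClosedFinsets]

lemma RunClosed.exists_window (hs : RunClosed m s) (hN : s ⊆ range N) {i : ℕ} (hi : i ∈ s) :
    ∃ j, j ≤ i ∧ i < j + m ∧ j + m ≤ N ∧ Ico j (j + m) ⊆ s := by
  obtain ⟨j, hij, hjs⟩ := hs i hi
  rw [mem_Ico] at hij
  have hlast := mem_range.mp (hN (hjs (mem_Ico.mpr ⟨by omega, by omega⟩ : j + m - 1 ∈ _)))
  exact ⟨j, hij.1, hij.2, by omega, hjs⟩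

lemma RunClosed.of_exists_window (h : ∀ i ∈ s, ∃ j ≤ i, i < j + m ∧ Ico j (j + m) ⊆ s) :
    RunClosed m s := fun i hi => by
  obtain ⟨j, hji, hij, hjs⟩ := h i hi
  exact ⟨j, mem_Ico.mpr ⟨hji, hij⟩, hjs⟩

lemma runClosedFinsets_of_lt (h : N < m) : runClosedFinsets m N = {∅} := by
  ext s
  rw [mem_runClosedFinsets, mem_singleton]
  refine ⟨fun ⟨hN, hs⟩ => eq_empty_of_forall_notMem fun i hi => ?_, ?_⟩
  · obtain ⟨j, -, -, hjN, -⟩ := hs.exists_window hN hi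
    omega
  · rintro rfl
    exact ⟨empty_subset _, fun i hi => absurd hi (notMem_empty i)⟩

lemma runCount_of_lt (h : N < m) : runCount m N = 1 := by
  rw [runCount, runClosedFinsets_of_lt h, card_singleton]

lemma runCount_succ :
    runCount m (N + 1) = runCount m N + #{s ∈ runClosedFinsets m (N + 1) | N ∈ s} := by
  have hlast : {s ∈ runClosedFinsets m (N + 1) | N ∉ s} = runClosedFinsets m N := by
    ext s
    simp only [mem_filter, mem_runClosedFinsets, subset_iff, mem_range]
    constructor
    · rintro ⟨⟨hN, hs⟩, hNs⟩
      refine ⟨fun i hi => lt_of_le_of_ne (Nat.lt_succ_iff.mp (hN hi)) ?_, hs⟩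
      rintro rfl
      exact hNs hi
    · rintro ⟨hN, hs⟩
      exact ⟨⟨fun i hi => (hN hi).trans (Nat.lt_succ_self N), hs⟩, fun h => (hN h).false⟩
  rw [runCount, runCount, ← card_filter_add_card_filter_not (N ∈ ·), hlast, add_comm]

lemma tailRunCount_zero : tailRunCount m N 0 = runCount m N := by
  simp [tailRunCount, runCount]

/-- A run ending at position `N` is at least `m ≥ z` long. -/
lemma tailRunCount_add_runCount {z : ℕ} (hz : 1 ≤ z) (hzm : z ≤ m) :
    tailRunCount m (N + 1) z + runCount m N = runCount m (N + 1) := by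
  rw [runCount_succ, add_comm (runCount m N), tailRunCount]
  congr 2
  ext s
  simp only [mem_filter, and_congr_right_iff]
  intro hs
  obtain ⟨hN, hrun⟩ := mem_runClosedFinsets.mp hs
  refine ⟨fun h => h (mem_Ico.mpr ⟨by omega, by omega⟩), fun hNs => ?_⟩
  obtain ⟨j, hjN, hNj, hjm, hjs⟩ := hrun.exists_window hN hNs
  exact (Ico_subset_Ico (by omega) (by omega)).trans hjs

lemma RunClosed.union_window (hs : RunClosed m s) (a : ℕ) :
    RunClosed m (s ∪ Ico a (a + m)) := by
  intro i hi
  rcases mem_union.mp hi with hi | hi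
  · obtain ⟨j, hij, hjs⟩ := hs i hi
    exact ⟨j, hij, hjs.trans subset_union_left⟩
  · exact ⟨a, hi, subset_union_right⟩

lemma RunClosed.filter_lt (hs : RunClosed m s) (hN : N ∉ s) : RunClosed m {i ∈ s | i < N} := by
  refine RunClosed.of_exists_window fun i hi => ?_
  obtain ⟨hi, hiN⟩ := mem_filter.mp hi
  obtain ⟨j, hij, hjs⟩ := hs i hi
  rw [mem_Ico] at hij
  have hjm : j + m ≤ N := by
    by_contra h
    exact hN (hjs (mem_Ico.mpr ⟨by omega, by omega⟩))
  exact ⟨j, hij.1, hij.2, fun x hx => mem_filter.mpr ⟨hjs hx, by rw [mem_Ico] at hx; omega⟩⟩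

/-- A window through `N` is replaced by the one just before `N`, inside the final run. -/
lemma RunClosed.erase_last (hs : RunClosed m s) (hN : s ⊆ range (N + 1)) (hm : m ≤ N)
    (htail : Ico (N - m) (N + 1) ⊆ s) : RunClosed m (s.erase N) := by
  refine RunClosed.of_exists_window fun i hi => ?_
  obtain ⟨j, hji, hij, hjN, hjs⟩ := hs.exists_window hN (mem_of_mem_erase hi)
  have hiN := ne_of_mem_erase hi
  by_cases hjN' : j + m ≤ N
  · exact ⟨j, hji, hij, fun x hx => mem_erase.mpr ⟨by rw [mem_Ico] at hx; omega, hjs hx⟩⟩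
  · exact ⟨N - m, by omega, by omega, fun x hx => mem_erase.mpr
      ⟨by rw [mem_Ico] at hx; omega, htail (by rw [mem_Ico] at hx ⊢; omega)⟩⟩

lemma RunClosed.insert_last (hs : RunClosed m s) (hm : 0 < m) (hmN : m ≤ N + 1)
    (htail : Ico (N + 1 - m) N ⊆ s) : RunClosed m (insert N s) := by
  refine RunClosed.of_exists_window fun i hi => ?_
  rcases mem_insert.mp hi with rfl | hi
  · refine ⟨i + 1 - m, by omega, by omega, fun x hx => ?_⟩
    rw [mem_Ico] at hx
    rcases eq_or_lt_of_le (show x ≤ i by omega) with rfl | hx'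
    · exact mem_insert_self _ _
    · exact mem_insert_of_mem (htail (mem_Ico.mpr ⟨by omega, hx'⟩))
  · obtain ⟨j, hij, hjs⟩ := hs i hi
    rw [mem_Ico] at hij
    exact ⟨j, hij.1, hij.2, hjs.trans (subset_insert _ _)⟩

lemma tailRunCount_succ_succ {z : ℕ} (hm : 0 < m) (hmz : m ≤ z) (hzN : z ≤ N) :
    tailRunCount m (N + 1) (z + 1) = tailRunCount m N z := by
  rw [tailRunCount, tailRunCount, show N + 1 - (z + 1) = N - z by omega]
  have hIco : Ico (N - z) (N + 1) = insert N (Ico (N - z) N) := by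
    ext x
    simp only [mem_Ico, mem_insert]
    omega
  refine card_nbij' (·.erase N) (insert N) ?_ ?_ ?_ ?_
  · intro s hs
    simp only [mem_coe, mem_filter, mem_runClosedFinsets] at hs ⊢
    obtain ⟨⟨hN, hrun⟩, htail⟩ := hs
    refine ⟨⟨fun i hi => ?_, hrun.erase_last hN (by omega)
      ((Ico_subset_Ico_left (by omega)).trans htail)⟩, ?_⟩
    · have := mem_range.mp (hN (mem_of_mem_erase hi))
      exact mem_range.mpr (lt_of_le_of_ne (by omega) (ne_of_mem_erase hi))
    · rw [hIco] at htail
      exact fun i hi => mem_erase.mpr ⟨(mem_Ico.mp hi).2.ne, htail (mem_insert_of_mem hi)⟩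
  · intro t ht
    simp only [mem_coe, mem_filter, mem_runClosedFinsets] at ht ⊢
    obtain ⟨⟨hN, hrun⟩, htail⟩ := ht
    refine ⟨⟨insert_subset (mem_range.mpr (by omega)) (hN.trans (range_subset_range.mpr
      (by omega))), hrun.insert_last hm (by omega)
        ((Ico_subset_Ico_left (by omega)).trans htail)⟩, ?_⟩
    rw [hIco]
    exact insert_subset_insert N htail
  · intro s hs
    simp only [mem_coe, mem_filter] at hs
    exact insert_erase (hs.2 (mem_Ico.mpr ⟨by omega, by omega⟩))
  · intro t ht
    simp only [mem_coe, mem_filter, mem_runClosedFinsets] at ht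
    exact erase_insert fun h => (mem_range.mp (ht.1.1 h)).false

lemma card_lastRun_eq_runCount :
    #{s ∈ runClosedFinsets m (N + m + 1) | Ico (N + 1) (N + m + 1) ⊆ s ∧ N ∉ s} =
      runCount m N := by
  rw [runCount, show N + m + 1 = N + 1 + m by omega]
  refine card_nbij' (fun s => {i ∈ s | i < N}) (· ∪ Ico (N + 1) (N + 1 + m)) ?_ ?_ ?_ ?_
  · intro s hs
    simp only [mem_coe, mem_filter, mem_runClosedFinsets] at hs ⊢
    exact ⟨fun i hi => mem_range.mpr (mem_filter.mp hi).2, hs.1.2.filter_lt hs.2.2⟩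
  · intro t ht
    simp only [mem_coe, mem_filter, mem_runClosedFinsets] at ht ⊢
    refine ⟨⟨union_subset (ht.1.trans (range_subset_range.mpr (by omega)))
      (fun x hx => mem_range.mpr (mem_Ico.mp hx).2), ht.2.union_window _⟩,
      subset_union_right, fun h => ?_⟩
    rcases mem_union.mp h with h | h
    · exact (mem_range.mp (ht.1 h)).false
    · simp at h
  · intro s hs
    simp only [mem_coe, mem_filter, mem_runClosedFinsets] at hs
    obtain ⟨⟨hN, -⟩, hrun, hNs⟩ := hs
    ext x
    simp only [mem_union, mem_filter]
    refine ⟨fun h => h.elim And.left (hrun ·), fun hx => ?_⟩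
    have := mem_range.mp (hN hx)
    have : x ≠ N := fun h => hNs (h ▸ hx)
    by_cases hxN : x < N
    · exact Or.inl ⟨hx, hxN⟩
    · exact Or.inr (mem_Ico.mpr ⟨by omega, by omega⟩)
  · intro t ht
    simp only [mem_coe, mem_runClosedFinsets] at ht
    ext x
    simp only [mem_filter, mem_union, mem_Ico]
    refine ⟨fun ⟨hx, hxN⟩ => hx.resolve_right (by omega), fun hx => ⟨Or.inl hx, ?_⟩⟩
    exact mem_range.mp (ht.1 hx)

lemma tailRunCount_eq_add :
    tailRunCount m (N + m + 1) m = tailRunCount m (N + m + 1) (m + 1) + runCount m N := by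
  rw [← card_lastRun_eq_runCount, tailRunCount, tailRunCount, show N + m + 1 - m = N + 1 by omega,
    show N + m + 1 - (m + 1) = N by omega, ← card_filter_add_card_filter_not (N ∈ ·),
    filter_filter, filter_filter]
  congr 2
  refine filter_congr fun s _ => ?_
  rw [← insert_Ico_add_one_left_eq_Ico (show N < N + m + 1 by omega), insert_subset_iff, and_comm]

lemma runCount_add_runCount (hm : 0 < m) (hN : m ≤ N) :
    runCount m (N + 2) + runCount m N = 2 * runCount m (N + 1) + runCount m (N + 1 - m) := by
  obtain ⟨N, rfl⟩ : ∃ N', N = N' + m := ⟨N - m, by omega⟩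
  have hlast₂ : tailRunCount m (N + m + 2) m + runCount m (N + m + 1) = runCount m (N + m + 2) :=
    tailRunCount_add_runCount hm le_rfl
  have hexact : tailRunCount m (N + m + 2) m =
      tailRunCount m (N + m + 2) (m + 1) + runCount m (N + 1) := by
    rw [show N + m + 2 = N + 1 + m + 1 by omega]
    exact tailRunCount_eq_add
  have hshift : tailRunCount m (N + m + 2) (m + 1) = tailRunCount m (N + m + 1) m :=
    tailRunCount_succ_succ hm le_rfl (by omega)
  have hlast₁ : tailRunCount m (N + m + 1) m + runCount m (N + m) = runCount m (N + m + 1) :=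
    tailRunCount_add_runCount hm le_rfl
  rw [show N + m + 1 - m = N + 1 by omega]
  omega

lemma tailRunCount_eq_sub {z : ℕ} (hz : 1 ≤ z) (hzm : z ≤ m) (hzN : z ≤ N) :
    (tailRunCount m N z : ℤ) = runCount m N - runCount m (N - 1) := by
  obtain ⟨N, rfl⟩ : ∃ N', N = N' + 1 := ⟨N - 1, by omega⟩
  rw [Nat.add_sub_cancel, ← tailRunCount_add_runCount hz hzm]
  push_cast
  ring

lemma sum_range_tailRunCount {j : ℕ} (hjm : j ≤ m) (hjN : j ≤ N) :
    ∑ z ∈ range (j + 1), (tailRunCount m N z : ℤ) =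
      runCount m N + j * (runCount m N - runCount m (N - 1)) := by
  rw [sum_range_succ', tailRunCount_zero, sum_congr rfl fun z hz =>
    tailRunCount_eq_sub (by omega) (by rw [mem_range] at hz; omega)
      (by rw [mem_range] at hz; omega), sum_const, card_range, nsmul_eq_mul]
  ring

lemma sum_range_tailRunCount_succ (hm : 0 < m) (h : m ≤ N + 1) :
    ∑ z ∈ range (N + 2), (tailRunCount m (N + 1) z : ℤ) =
      ∑ z ∈ range (N + 1), (tailRunCount m N z : ℤ)
        + (m + 1) * (runCount m (N + 1) - runCount m N)
        - (m - 1) * (runCount m N - runCount m (N - 1)) := by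
  obtain ⟨m, rfl⟩ : ∃ m', m = m' + 1 := ⟨m - 1, by omega⟩
  have hsplit (M j : ℕ) (hj : j ≤ M + 1) :
      ∑ z ∈ range (M + 1), (tailRunCount (m + 1) M z : ℤ) =
        ∑ z ∈ range j, (tailRunCount (m + 1) M z : ℤ) +
        ∑ x ∈ range (M + 1 - j), (tailRunCount (m + 1) M (j + x) : ℤ) := by
    rw [← sum_range_add, Nat.add_sub_cancel' hj]
  have hshift : ∀ x ∈ range (N - m), (tailRunCount (m + 1) (N + 1) (m + 2 + x) : ℤ) =
      tailRunCount (m + 1) N (m + 1 + x) := fun x hx => by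
    rw [mem_range] at hx
    rw [show m + 2 + x = m + 1 + x + 1 by omega,
      tailRunCount_succ_succ hm (by omega) (by omega)]
  rw [hsplit (N + 1) (m + 2) (by omega), hsplit N (m + 1) (by omega),
    sum_range_tailRunCount le_rfl (by omega), sum_range_tailRunCount (by omega) (by omega),
    show N + 1 + 1 - (m + 2) = N - m by omega, show N + 1 - (m + 1) = N - m by omega,
    sum_congr rfl hshift, Nat.add_sub_cancel]
  push_cast
  ring

lemma sum_range_tailRunCount_eq (hm : 0 < m) (N : ℕ) :
    ∑ z ∈ range (N + 1), (tailRunCount m N z : ℤ) =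
      (m + 1) * runCount m N - (m - 1) * runCount m (N - 1) - 1 := by
  induction N with
  | zero => simp [tailRunCount_zero, runCount_of_lt hm]
  | succ N ih =>
    rcases lt_or_ge (N + 1) m with h | h
    · rw [sum_range_tailRunCount h.le le_rfl, Nat.add_sub_cancel, runCount_of_lt h,
        runCount_of_lt (by omega)]
      ring
    · rw [sum_range_tailRunCount_succ hm h, ih, Nat.add_sub_cancel]
      ring

end Linear

section Cyclic

variable {n N m : ℕ}

def cycWindow (m : ℕ) (u : ZMod n) : Set (ZMod n) := {w | ∃ t < m, w = u + t}

def CycRunClosed (m : ℕ) (C : Set (ZMod n)) : Prop :=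
  ∀ v ∈ C, ∃ u, v ∈ cycWindow m u ∧ cycWindow m u ⊆ C

/-- `v = p + 1 + posAfter p v`: positions are counted from `p + 1`, so `p` itself is last. -/
def posAfter (p v : ZMod (N + 1)) : ℕ := (v - p - 1).val

variable {p u v : ZMod (N + 1)}

lemma posAfter_lt : posAfter p v < N + 1 := ZMod.val_lt _

lemma posAfter_injective : Function.Injective (posAfter p) := fun v w h => by
  simpa using ZMod.val_injective _ h

lemma posAfter_eq_last_iff : posAfter p v = N ↔ v = p := by
  constructor
  · intro h
    have : v - p - 1 = -1 := ZMod.val_injective _ (h.trans (ZMod.val_neg_one N).symm)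
    linear_combination this
  · rintro rfl
    simp [posAfter, ZMod.val_neg_one]

lemma posAfter_add {t : ℕ} (ht : posAfter p u + t < N + 1) :
    posAfter p (u + t) = posAfter p u + t := by
  have ht' : (t : ZMod (N + 1)).val = t := ZMod.val_natCast_of_lt (by omega)
  rw [posAfter, show u + t - p - 1 = (u - p - 1) + t by ring,
    ZMod.val_add_of_lt (by rw [ht']; exact ht), ht']
  rfl

lemma posAfter_natCast {i : ℕ} (hi : i < N + 1) : posAfter p (p + 1 + i) = i := by
  rw [posAfter, show p + 1 + i - p - 1 = (i : ZMod (N + 1)) by ring, ZMod.val_natCast_of_lt hi]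

lemma cycRunClosed_univ (hm : 0 < m) : CycRunClosed m (Set.univ : Set (ZMod n)) :=
  fun v _ => ⟨v, ⟨0, hm, by simp⟩, Set.subset_univ _⟩

def roll (p : ZMod (N + 1)) (s : Finset ℕ) : Set (ZMod (N + 1)) := {v | posAfter p v ∈ s}

open scoped Classical in
noncomputable def unroll (p : ZMod (N + 1)) (C : Set (ZMod (N + 1))) : Finset ℕ :=
  {i ∈ range N | p + 1 + i ∈ C}

variable {s : Finset ℕ} {C : Set (ZMod (N + 1))}

lemma mem_roll : v ∈ roll p s ↔ posAfter p v ∈ s := Iff.rfl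

lemma notMem_roll (hs : s ⊆ range N) : p ∉ roll p s := by
  rw [mem_roll, posAfter_eq_last_iff.mpr rfl]
  exact fun h => (mem_range.mp (hs h)).false

lemma unroll_subset : unroll p C ⊆ range N := by
  classical
  exact filter_subset _ _

lemma unroll_roll (hs : s ⊆ range N) : unroll p (roll p s) = s := by
  ext i
  simp only [unroll, mem_filter, mem_range, mem_roll]
  constructor
  · rintro ⟨hi, h⟩
    rwa [posAfter_natCast (by omega)] at h
  · intro h
    have hi := mem_range.mp (hs h)
    exact ⟨hi, by rwa [posAfter_natCast (by omega)]⟩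

lemma roll_unroll (hp : p ∉ C) : roll p (unroll p C) = C := by
  ext v
  have hv : p + 1 + (posAfter p v : ZMod (N + 1)) = v := by
    rw [posAfter, ZMod.natCast_zmod_val]
    ring
  simp only [mem_roll, unroll, mem_filter, mem_range, hv]
  refine ⟨And.right, fun h => ⟨lt_of_le_of_ne (Nat.lt_succ_iff.mp posAfter_lt) ?_, h⟩⟩
  rw [Ne, posAfter_eq_last_iff]
  rintro rfl
  exact hp h

/-- A cyclic window avoiding `p` does not wrap around past `p`, so it unrolls to a window. -/
lemma cycRunClosed_roll_iff (hs : s ⊆ range N) : CycRunClosed m (roll p s) ↔ RunClosed m s := by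
  constructor
  · intro h i hi
    have hiN := mem_range.mp (hs hi)
    obtain ⟨u, ⟨t₀, ht₀, hv⟩, hu⟩ :=
      h (p + 1 + i) (by rw [mem_roll, posAfter_natCast (by omega)]; exact hi)
    have hj : posAfter p u + m ≤ N := by
      by_contra hj
      have := posAfter_lt (p := p) (v := u)
      have hlast := hu ⟨N - posAfter p u, by omega, rfl⟩
      rw [mem_roll, posAfter_add (by omega), Nat.add_sub_cancel' (by omega)] at hlast
      exact (mem_range.mp (hs hlast)).false
    have hwin : ∀ t < m, posAfter p (u + t) = posAfter p u + t :=
      fun t ht => posAfter_add (by omega)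
    refine ⟨posAfter p u, ?_, fun x hx => ?_⟩
    · have hpos := congrArg (posAfter p) hv
      rw [posAfter_natCast (by omega), hwin t₀ ht₀] at hpos
      rw [mem_Ico]
      omega
    · rw [mem_Ico] at hx
      have hx' := hu ⟨x - posAfter p u, by omega, rfl⟩
      rwa [mem_roll, hwin _ (by omega), Nat.add_sub_cancel' hx.1] at hx'
  · intro h v hv
    obtain ⟨j, hji, hij, hjN, hjs⟩ := h.exists_window hs hv
    have hwin : ∀ t < m, posAfter p (p + 1 + j + t) = j + t := fun t ht => by
      rw [posAfter_add (by rw [posAfter_natCast (by omega)]; omega), posAfter_natCast (by omega)]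
    refine ⟨p + 1 + j, ⟨posAfter p v - j, by omega, posAfter_injective (p := p) ?_⟩, ?_⟩
    · rw [hwin _ (by omega)]
      omega
    · rintro w ⟨t, ht, rfl⟩
      rw [mem_roll, hwin t ht]
      exact hjs (mem_Ico.mpr ⟨by omega, by omega⟩)

lemma posAfter_natCast_of_lt {z i : ℕ} (hz : z ≤ N) (hi : i < z) :
    posAfter (z : ZMod (N + 1)) i = N - z + i := by
  have h0 : ((N : ℕ) : ZMod (N + 1)) + 1 = 0 := by exact_mod_cast ZMod.natCast_self (N + 1)
  have hcast : (i : ZMod (N + 1)) - z - 1 = ((N - z + i : ℕ) : ZMod (N + 1)) := by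
    push_cast [Nat.cast_sub hz]
    linear_combination -h0
  rw [posAfter, hcast, ZMod.val_natCast_of_lt (by omega)]

lemma forall_lt_mem_roll_iff {z : ℕ} (hz : z ≤ N) :
    (∀ i < z, (i : ZMod (N + 1)) ∈ roll z s) ↔ Ico (N - z) N ⊆ s := by
  simp only [mem_roll]
  constructor
  · intro h x hx
    rw [mem_Ico] at hx
    have := h (x - (N - z)) (by omega)
    rwa [posAfter_natCast_of_lt hz (by omega), Nat.add_sub_cancel' hx.1] at this
  · intro h i hi
    rw [posAfter_natCast_of_lt hz hi]
    exact h (mem_Ico.mpr ⟨by omega, by omega⟩)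

open scoped Classical in
lemma card_cycRunClosed_firstGap {z : ℕ} (hz : z ≤ N) :
    #{C : Set (ZMod (N + 1)) |
        CycRunClosed m C ∧ (z : ZMod (N + 1)) ∉ C ∧ ∀ i < z, (i : ZMod (N + 1)) ∈ C} =
      tailRunCount m N z := by
  rw [tailRunCount]
  refine card_nbij' (unroll z) (roll z) ?_ ?_ ?_ ?_
  · intro C hC
    simp only [mem_coe, mem_filter, mem_univ, true_and] at hC
    obtain ⟨hrun, hgap, hlt⟩ := hC
    rw [← roll_unroll hgap] at hrun hlt
    simp only [mem_coe, mem_filter, mem_runClosedFinsets]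
    exact ⟨⟨unroll_subset, (cycRunClosed_roll_iff unroll_subset).mp hrun⟩,
      (forall_lt_mem_roll_iff hz).mp hlt⟩
  · intro s hs
    simp only [mem_coe, mem_filter, mem_runClosedFinsets] at hs
    obtain ⟨⟨hsub, hrun⟩, htail⟩ := hs
    simp only [mem_coe, mem_filter, mem_univ, true_and]
    exact ⟨(cycRunClosed_roll_iff hsub).mpr hrun, notMem_roll hsub,
      (forall_lt_mem_roll_iff hz).mpr htail⟩
  · intro C hC
    simp only [mem_coe, mem_filter, mem_univ, true_and] at hC
    exact roll_unroll hC.2.1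
  · intro s hs
    simp only [mem_coe, mem_filter, mem_runClosedFinsets] at hs
    exact unroll_roll hs.1.1

lemma card_cycRunClosed (hm : 0 < m) :
    Nat.card {C : Set (ZMod (N + 1)) // CycRunClosed m C} =
      1 + ∑ z ∈ range (N + 1), tailRunCount m N z := by
  classical
  set gap : ℕ → Finset (Set (ZMod (N + 1))) := fun z =>
    {C | CycRunClosed m C ∧ (z : ZMod (N + 1)) ∉ C ∧ ∀ i < z, (i : ZMod (N + 1)) ∈ C}
  have hdecomp : ({C | CycRunClosed m C} : Finset (Set (ZMod (N + 1)))) =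
      insert Set.univ ((range (N + 1)).biUnion gap) := by
    ext C
    simp only [gap, mem_filter, mem_univ, true_and, mem_insert, mem_biUnion, mem_range]
    constructor
    · intro hC
      refine or_iff_not_imp_left.mpr fun hCu => ?_
      obtain ⟨v, hv⟩ := (Set.ne_univ_iff_exists_notMem C).mp hCu
      have hex : ∃ z : ℕ, (z : ZMod (N + 1)) ∉ C :=
        ⟨v.val, by rwa [ZMod.natCast_zmod_val]⟩
      exact ⟨Nat.find hex, (Nat.find_min' hex (by rwa [ZMod.natCast_zmod_val])).trans_lt
        (ZMod.val_lt v), hC, Nat.find_spec hex, fun i hi => not_not.mp (Nat.find_min hex hi)⟩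
    · rintro (rfl | ⟨z, -, hC, -⟩)
      · exact cycRunClosed_univ hm
      · exact hC
  have hdisj : (range (N + 1) : Set ℕ).PairwiseDisjoint gap := by
    intro z₁ _ z₂ _ hne
    refine disjoint_left.mpr fun C h₁ h₂ => ?_
    simp only [gap, mem_filter, mem_univ, true_and] at h₁ h₂
    rcases lt_or_gt_of_ne hne with h | h
    · exact h₁.2.1 (h₂.2.2 z₁ h)
    · exact h₂.2.1 (h₁.2.2 z₂ h)
  have huniv : Set.univ ∉ (range (N + 1)).biUnion gap := by
    simp [gap]
  rw [Nat.card_eq_fintype_card, Fintype.card_subtype, hdecomp, card_insert_of_notMem huniv,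
    card_biUnion hdisj, add_comm]
  exact congrArg (1 + ·) (sum_congr rfl fun z hz =>
    card_cycRunClosed_firstGap (m := m) (Nat.lt_succ_iff.mp (mem_range.mp hz)))

end Cyclic

section Graph

variable {V : Type*} (G : SimpleGraph V)

lemma mem_insert_neighborSet_comm {v w : V} :
    w ∈ insert v (G.neighborSet v) ↔ v ∈ insert w (G.neighborSet w) := by
  simp only [Set.mem_insert_iff, mem_neighborSet, eq_comm, G.adj_comm]

lemma digConvex_iff (S : Set V) :
    DigConvex G S ↔ ∀ v ∉ S, ∃ x, v ∈ insert x (G.neighborSet x) ∧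
      insert x (G.neighborSet x) ⊆ Sᶜ := by
  refine forall_congr' fun v => ?_
  rw [← not_imp_not]
  refine imp_congr_right fun _ => ?_
  simp only [closedNbhd, Set.subset_def, Set.mem_iUnion, Set.mem_compl_iff, not_forall,
    not_exists, exists_prop]
  exact exists_congr fun x => and_congr (mem_insert_neighborSet_comm G)
    ⟨fun h y hy hyS => h y ⟨hyS, (mem_insert_neighborSet_comm G).mp hy⟩,
      fun h i ⟨hiS, hx⟩ => h i ((mem_insert_neighborSet_comm G).mp hx) hiS⟩

end Graph

lemma insert_neighborSet_cyclePow (n k : ℕ) (v : ZMod n) :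
    insert v ((cyclePow n k).neighborSet v) = cycWindow (2 * k + 1) (v - (k : ZMod n)) := by
  ext w
  simp only [Set.mem_insert_iff, mem_neighborSet, cyclePow, fromRel_adj, cycWindow,
    Set.mem_ofPred_eq]
  constructor
  · rintro (rfl | ⟨-, ⟨t, -, htk, rfl⟩ | ⟨t, -, htk, hw⟩⟩)
    · exact ⟨k, by omega, by ring⟩
    · exact ⟨k + t, by omega, by push_cast; ring⟩
    · exact ⟨k - t, by omega, by rw [Nat.cast_sub htk]; linear_combination -hw⟩
  · rintro ⟨t, ht, rfl⟩
    by_cases hw : v - k + t = v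
    · exact Or.inl hw
    · refine Or.inr ⟨Ne.symm hw, ?_⟩
      rcases lt_trichotomy t k with h | rfl | h
      · exact Or.inr ⟨k - t, by omega, by omega, by rw [Nat.cast_sub h.le]; ring⟩
      · exact absurd (by ring) hw
      · exact Or.inl ⟨t - k, by omega, by omega, by rw [Nat.cast_sub h.le]; ring⟩

lemma digConvex_cyclePow_iff (n k : ℕ) (S : Set (ZMod n)) :
    DigConvex (cyclePow n k) S ↔ CycRunClosed (2 * k + 1) Sᶜ := by
  simp only [digConvex_iff, insert_neighborSet_cyclePow, CycRunClosed, Set.mem_compl_iff]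
  exact forall₂_congr fun v _ =>
    ⟨fun ⟨x, hx⟩ => ⟨x - k, hx⟩,
      fun ⟨u, hu⟩ => ⟨u + k, by rwa [add_sub_cancel_right]⟩⟩

lemma nD_cyclePow (n k : ℕ) :
    nD (cyclePow n k) = Nat.card {C : Set (ZMod n) // CycRunClosed (2 * k + 1) C} :=
  Nat.card_congr (Equiv.subtypeEquiv (compl_involutive.toPerm _) (digConvex_cyclePow_iff n k))

lemma nD_cyclePow_add_two (k N : ℕ) :
    (nD (cyclePow (N + 2) k) : ℤ) =
      (2 * k + 2) * runCount (2 * k + 1) (N + 1) - 2 * k * runCount (2 * k + 1) N := by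
  rw [nD_cyclePow, card_cycRunClosed (by omega), Nat.cast_add, Nat.cast_sum,
    sum_range_tailRunCount_eq (by omega), Nat.add_sub_cancel]
  push_cast
  ring

end DigitalConvexity

theorem nD_cyclePow_recurrence (k n : ℕ) (hn : 2 * k + 5 ≤ n) :
    (nD (cyclePow n k) : ℤ) =
      2 * nD (cyclePow (n - 1) k) - nD (cyclePow (n - 2) k)
        + nD (cyclePow (n - 2 * k - 2) k) := by
  obtain ⟨j, rfl⟩ : ∃ j, n = j + 2 * k + 5 := ⟨n - (2 * k + 5), by omega⟩
  rw [show j + 2 * k + 5 - 1 = j + 2 * k + 2 + 2 by omega,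
    show j + 2 * k + 5 - 2 = j + 2 * k + 1 + 2 by omega,
    show j + 2 * k + 5 - 2 * k - 2 = j + 1 + 2 by omega,
    show j + 2 * k + 5 = j + 2 * k + 3 + 2 by omega]
  simp only [DigitalConvexity.nD_cyclePow_add_two]
  have hm : 0 < 2 * k + 1 := by omega
  have r₁ := DigitalConvexity.runCount_add_runCount (N := j + 2 * k + 2) hm (by omega)
  have r₂ := DigitalConvexity.runCount_add_runCount (N := j + 2 * k + 1) hm (by omega)
  rw [show j + 2 * k + 2 + 1 - (2 * k + 1) = j + 2 by omega] at r₁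
  rw [show j + 2 * k + 1 + 1 - (2 * k + 1) = j + 1 by omega] at r₂
  zify at r₁ r₂
  ring_nf at r₁ r₂ ⊢
  linear_combination (2 * k + 2 : ℤ) * r₁ - 2 * k * r₂
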